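/- Consider the residual-sketch iteration: given A ∈ ℝ^{m×n}, b ∈ ℝ^m, x₀ ∈ ℝ^n, set r₀ = b − A x₀ and for j ≥ 1 let S_j = [r₀ … r_{j−1}], p_j = Aᵀ S_j (S_jᵀ A Aᵀ S_j)⁻¹ S_jᵀ r_{j−1}, x_j = x_{j−1} + p_j, r_j = b − A x_j, assuming the Gram matrices are invertible through step k, with k ≥ 2. Set y_k = Aᵀ r_{k−1}. Then y_kᵀ p_{k−1} = −‖r_{k−1}‖₂², y_kᵀ p_j = 0 for every 1 ≤ j ≤ k−2, and y_kᵀ p_k = ‖r_{k−1}‖₂². -/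

import Mathlib

/-!
Each step makes the new residual orthogonal to the whole sketch: `S_jᵀ A p_j = S_jᵀ r_{j-1}`,
so `S_jᵀ r_j = 0` and the residuals `r_0, …, r_k` are mutually orthogonal. Since `A p_j` is the
residual difference `r_{j-1} - r_j`, we get `y_kᵀ p_j = r_{k-1}ᵀ r_{j-1} - r_{k-1}ᵀ r_j`, and
orthogonality leaves only the terms with index `k - 1`.
-/

open Matrix

/-- `colCat r k` is the matrix `[r 0 … r (k-1)]` whose `l`-th column is `r l`. -/
def colCat {m : ℕ} (r : ℕ → Fin m → ℝ) (k : ℕ) : Matrix (Fin m) (Fin k) ℝ :=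
  Matrix.of fun i l => r l.val i

noncomputable def sketchStep {R m n ι : Type*} [CommRing R] [Fintype m] [Fintype n] [Fintype ι]
    [DecidableEq ι] (A : Matrix m n R) (S : Matrix m ι R) (v : ι → R) : n → R :=
  (Aᵀ * S) *ᵥ ((Sᵀ * A * Aᵀ * S)⁻¹ *ᵥ v)

theorem transpose_mulVec_mulVec_sketchStep {R m n ι : Type*} [CommRing R] [Fintype m]
    [Fintype n] [Fintype ι] [DecidableEq ι] (A : Matrix m n R) (S : Matrix m ι R)
    (hS : IsUnit (Sᵀ * A * Aᵀ * S)) (v : ι → R) :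
    Sᵀ *ᵥ (A *ᵥ sketchStep A S v) = v := by
  simp only [sketchStep, mulVec_mulVec, ← Matrix.mul_assoc]
  rw [mul_nonsing_inv _ ((isUnit_iff_isUnit_det _).mp hS), one_mulVec]

@[simp]
theorem colCat_transpose_mulVec_apply {m k : ℕ} (r : ℕ → Fin m → ℝ) (v : Fin m → ℝ)
    (i : Fin k) : ((colCat r k)ᵀ *ᵥ v) i = r i ⬝ᵥ v :=
  rfl

theorem residual_dotProduct_residual_eq_zero {m n k : ℕ}
    (A : Matrix (Fin m) (Fin n) ℝ) (p : ℕ → Fin n → ℝ) (r : ℕ → Fin m → ℝ)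
    (hrec : ∀ j, 1 ≤ j → j ≤ k → r j = r (j - 1) - A *ᵥ p j)
    (hinv : ∀ j, 1 ≤ j → j ≤ k → IsUnit ((colCat r j)ᵀ * A * Aᵀ * colCat r j))
    (hp : ∀ j, 1 ≤ j → j ≤ k →
      p j = sketchStep A (colCat r j) ((colCat r j)ᵀ *ᵥ r (j - 1)))
    {i j : ℕ} (hij : i < j) (hjk : j ≤ k) : r i ⬝ᵥ r j = 0 := by
  have hj : 1 ≤ j := by omega
  have hsketch : (colCat r j)ᵀ *ᵥ r j = 0 := by
    rw [hrec j hj hjk, mulVec_sub, hp j hj hjk,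
      transpose_mulVec_mulVec_sketchStep A _ (hinv j hj hjk), sub_self]
  simpa using congrFun hsketch ⟨i, hij⟩

/-- In the residual-sketch (PLSS) iteration, with `y_k = Aᵀ r_{k−1}`:
`y_kᵀ p_{k−1} = −‖r_{k−1}‖²`, `y_kᵀ p_j = 0` for `1 ≤ j ≤ k−2`, and
`y_kᵀ p_k = ‖r_{k−1}‖²`. -/
theorem stmt13 (m n k : ℕ) (hk : 2 ≤ k)
    (A : Matrix (Fin m) (Fin n) ℝ) (b : Fin m → ℝ)
    (x p : ℕ → Fin n → ℝ) (r : ℕ → Fin m → ℝ)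
    (hr : ∀ j, r j = b - A.mulVec (x j))
    (hinv : ∀ j, 1 ≤ j → j ≤ k → IsUnit ((colCat r j)ᵀ * A * Aᵀ * colCat r j))
    (hp : ∀ j, 1 ≤ j → j ≤ k →
      p j = (Aᵀ * colCat r j).mulVec
        (((colCat r j)ᵀ * A * Aᵀ * colCat r j)⁻¹.mulVec
          ((colCat r j)ᵀ.mulVec (r (j - 1)))))
    (hx : ∀ j, 1 ≤ j → j ≤ k → x j = x (j - 1) + p j)
    (y : Fin n → ℝ) (hy : y = Aᵀ.mulVec (r (k - 1))) :
    y ⬝ᵥ p (k - 1) = -(r (k - 1) ⬝ᵥ r (k - 1)) ∧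
    (∀ j, 1 ≤ j → j ≤ k - 2 → y ⬝ᵥ p j = 0) ∧
    y ⬝ᵥ p k = r (k - 1) ⬝ᵥ r (k - 1) := by
  have hAp : ∀ j, 1 ≤ j → j ≤ k → A *ᵥ p j = r (j - 1) - r j := by
    intro j hj hjk
    rw [hr, hr, hx j hj hjk, mulVec_add]
    abel
  have horth : ∀ i j, i < j → j ≤ k → r j ⬝ᵥ r i = 0 := fun i j hij hjk => by
    rw [dotProduct_comm]
    exact residual_dotProduct_residual_eq_zero A p r
      (fun j hj hjk => by rw [hAp j hj hjk, sub_sub_cancel]) hinv hp hij hjk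
  have hyp : ∀ j, 1 ≤ j → j ≤ k → y ⬝ᵥ p j = r (k - 1) ⬝ᵥ r (j - 1) - r (k - 1) ⬝ᵥ r j := by
    intro j hj hjk
    rw [hy, mulVec_transpose, ← dotProduct_mulVec, hAp j hj hjk, dotProduct_sub]
  refine ⟨?_, fun j hj hjk => ?_, ?_⟩
  · rw [hyp (k - 1) (by omega) (by omega), horth (k - 1 - 1) (k - 1) (by omega) (by omega),
      zero_sub]
  · rw [hyp j hj (by omega), horth (j - 1) (k - 1) (by omega) (by omega),
      horth j (k - 1) (by omega) (by omega), sub_zero]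
  · rw [hyp k (by omega) le_rfl, dotProduct_comm (r (k - 1)) (r k),
      horth (k - 1) k (by omega) le_rfl, sub_zero]
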